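/- arXiv:1902.00912 — 2 statements merged into one kernel-verified Lean document; each statement's English description precedes it below -/
import Mathlib

section
/- Let n ≥ 1, s, r > 0, Δⁿ(s) = {p ∈ ℝⁿ : pᵢ > 0 for all i and p₁ + ⋯ + pₙ < s} (the interior of the simplex with vertices 0, se₁, …, seₙ), and Y = (0,r) × (0,∞)ⁿ⁻¹ ⊆ ℝⁿ. Then there exists a π̃₁-trivial symplectic embedding φ of 𝕋ⁿ × Δⁿ(s) into 𝕋ⁿ × ℝⁿ with image contained in 𝕋ⁿ × Y and such that for every u ∈ Δⁿ(s) the image φ(𝕋ⁿ × {u}) is a smooth section of T*𝕋ⁿ, if and only if s ≤ r. -/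
open scoped RealInnerProductSpace

noncomputable section

/-- `ℝⁿ` with the Euclidean inner product. -/
abbrev Evec (n : ℕ) := EuclideanSpace ℝ (Fin n)

/-- The integer vector `k ∈ ℤⁿ` regarded as an element of `ℝⁿ`. -/
def intVec {n : ℕ} (k : Fin n → ℤ) : Evec n := WithLp.toLp 2 (fun i => (k i : ℝ))

/-- The standard symplectic bilinear form on `ℝⁿ × ℝⁿ`:
`ω₀((a,b),(a',b')) = ⟨a,b'⟩ − ⟨a',b⟩`. -/
def omega0 {n : ℕ} (x y : Evec n × Evec n) : ℝ := ⟪x.1, y.2⟫ - ⟪y.1, x.2⟫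

/-- A `π̃₁`-trivial symplectic embedding of `𝕋ⁿ × D` into `𝕋ⁿ × ℝⁿ` with image contained
in `𝕋ⁿ × W`, in lifted coordinates. -/
structure IsTrivialSympEmb {n : ℕ} (D W : Set (Evec n))
    (φ : Evec n × Evec n → Evec n × Evec n) : Prop where
  smooth : ContDiffOn ℝ (⊤ : ℕ∞) φ (Set.univ ×ˢ D)
  equivariant : ∀ q, ∀ p ∈ D, ∀ k : Fin n → ℤ,
    φ (q + intVec k, p) = φ (q, p) + (intVec k, 0)
  injective : ∀ q q', ∀ p ∈ D, ∀ p' ∈ D,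
    (∃ k : Fin n → ℤ, φ (q, p) - φ (q', p') = (intVec k, 0)) →
    (∃ k : Fin n → ℤ, q - q' = intVec k) ∧ p = p'
  symplectic : ∀ q, ∀ p ∈ D, ∀ u w : Evec n × Evec n,
    omega0 (fderiv ℝ φ (q, p) u) (fderiv ℝ φ (q, p) w) = omega0 u w
  image_sub : ∀ q, ∀ p ∈ D, (φ (q, p)).2 ∈ W

/-- The image `φ(𝕋ⁿ × {u})` is a smooth section of `T*𝕋ⁿ`: it is the graph of a smooth
`ℤⁿ`-periodic map `σ : ℝⁿ → ℝⁿ`. -/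
def IsSmoothSection {n : ℕ} (φ : Evec n × Evec n → Evec n × Evec n) (u : Evec n) : Prop :=
  ∃ σ : Evec n → Evec n, ContDiff ℝ (⊤ : ℕ∞) σ ∧
    (∀ x (k : Fin n → ℤ), σ (x + intVec k) = σ x) ∧
    (fun q => φ (q, u)) '' Set.univ = (fun x => (x, σ x)) '' Set.univ

/-- The open simplex `Δⁿ(s)` with vertices `0, se₁, …, seₙ`. -/
def openSimplex (n : ℕ) (s : ℝ) : Set (Evec n) :=
  {p | (∀ i, 0 < p i) ∧ ∑ i, p i < s}

/-! ### auxiliary -/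

def sVec (n : ℕ) : Evec (n + 1) := EuclideanSpace.single 0 1

def kVec (n : ℕ) : Fin (n + 1) → ℤ := fun i => if i = 0 then 1 else 0

lemma intVec_kVec (n : ℕ) : intVec (kVec n) = sVec n := by
  ext i
  simp [intVec, kVec, sVec, EuclideanSpace.single_apply]

lemma isOpen_openSimplex (m : ℕ) (s : ℝ) : IsOpen (openSimplex m s) := by
  have h1 : IsOpen {p : Evec m | ∀ i, 0 < p i} := by
    rw [show {p : Evec m | ∀ i, 0 < p i} = ⋂ i, {p : Evec m | 0 < p i} by ext p; simp]
    exact isOpen_iInter_of_finite fun i =>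
      isOpen_lt continuous_const (EuclideanSpace.proj i).continuous
  have h2 : IsOpen {p : Evec m | ∑ i, p i < s} :=
    isOpen_lt (continuous_finset_sum _ fun i _ => (EuclideanSpace.proj (𝕜 := ℝ) i).continuous)
      continuous_const
  exact h1.inter h2

lemma convex_openSimplex (m : ℕ) (s : ℝ) : Convex ℝ (openSimplex m s) := by
  intro p hp q hq a b ha hb hab
  have happ : ∀ i, (a • p + b • q) i = a * p i + b * q i := by
    intro i
    rw [PiLp.add_apply, PiLp.smul_apply, PiLp.smul_apply, smul_eq_mul, smul_eq_mul]
  constructor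
  · intro i
    rw [happ]
    rcases eq_or_lt_of_le ha with h | h
    · have hb1 : b = 1 := by linarith
      rw [← h, hb1]
      simpa using hq.1 i
    · have h2 : 0 ≤ b * q i := mul_nonneg hb (le_of_lt (hq.1 i))
      nlinarith [hp.1 i]
  · have hsum : ∑ i, (a • p + b • q) i = a * ∑ i, p i + b * ∑ i, q i := by
      simp only [happ, Finset.sum_add_distrib, Finset.mul_sum]
    rw [hsum]
    rcases eq_or_lt_of_le ha with h | h
    · have hb1 : b = 1 := by linarith
      rw [← h, hb1]
      simpa using hq.2
    · have h1 : a * ∑ i, p i < a * s := by exact mul_lt_mul_of_pos_left hp.2 h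
      have h2 : b * ∑ i, q i ≤ b * s := mul_le_mul_of_nonneg_left (le_of_lt hq.2) hb
      have h3 : a * s + b * s = s := by rw [← add_mul, hab, one_mul]
      linarith
section Core

variable {m : ℕ}

/-- partial derivative in the second (time) variable -/
def pdT (c : ℝ × ℝ → Evec m × Evec m) (x : ℝ × ℝ) : Evec m × Evec m :=
  fderiv ℝ c x ((0 : ℝ), (1 : ℝ))

/-- partial derivative in the first (deformation) variable -/
def pdS (c : ℝ × ℝ → Evec m × Evec m) (x : ℝ × ℝ) : Evec m × Evec m :=
  fderiv ℝ c x ((1 : ℝ), (0 : ℝ))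

def QQ (c : ℝ × ℝ → Evec m × Evec m) (x : ℝ × ℝ) : ℝ :=
  ⟪(c x).2, (fderiv ℝ (fderiv ℝ c) x ((0:ℝ),(1:ℝ)) ((1:ℝ),(0:ℝ))).1⟫
    + ⟪(pdS c x).2, (pdT c x).1⟫

theorem core_lemma {J : Set ℝ} (hJ : IsOpen J) (hIcc : Set.Icc (0:ℝ) 1 ⊆ J)
    {c : ℝ × ℝ → Evec m × Evec m} (hc : ContDiffOn ℝ (⊤ : ℕ∞) c (J ×ˢ (Set.univ : Set ℝ)))
    {w : Evec m} (hb : ∀ τ ∈ J, c (τ, 1) = c (τ, 0) + (w, 0)) {κ : ℝ}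
    (hκ : ∀ τ ∈ J, ∀ t : ℝ,
      ⟪(pdT c (τ, t)).1, (pdS c (τ, t)).2⟫ - ⟪(pdS c (τ, t)).1, (pdT c (τ, t)).2⟫ = κ) :
    (∫ t in (0:ℝ)..1, ⟪(c (1, t)).2, (deriv (fun t' : ℝ => c (1, t')) t).1⟫)
      - (∫ t in (0:ℝ)..1, ⟪(c (0, t)).2, (deriv (fun t' : ℝ => c (0, t')) t).1⟫) = κ := by
  have h0J : (0:ℝ) ∈ J := hIcc ⟨le_refl 0, zero_le_one⟩
  have h1J : (1:ℝ) ∈ J := hIcc ⟨zero_le_one, le_refl 1⟩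
  set U : Set (ℝ × ℝ) := J ×ˢ (Set.univ : Set ℝ) with hUdef
  have hU : IsOpen U := hJ.prod isOpen_univ
  have hmem : ∀ τ ∈ J, ∀ t : ℝ, (τ, t) ∈ U := fun τ hτ t => ⟨hτ, trivial⟩
  -- differentiability of c
  have hdc : ∀ x ∈ U, DifferentiableAt ℝ c x := fun x hx =>
    ((hc.contDiffAt (hU.mem_nhds hx)).differentiableAt (by simp))
  have hc1 : ContDiffOn ℝ (⊤ : ℕ∞) (fderiv ℝ c) U := hc.fderiv_of_isOpen hU (by simp)
  have hdfc : ∀ x ∈ U, DifferentiableAt ℝ (fderiv ℝ c) x := fun x hx =>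
    ((hc1.contDiffAt (hU.mem_nhds hx)).differentiableAt (by simp))
  -- second derivative symmetry
  have hsym : ∀ x ∈ U, ∀ v w' : ℝ × ℝ,
      fderiv ℝ (fderiv ℝ c) x v w' = fderiv ℝ (fderiv ℝ c) x w' v := by
    intro x hx v w'
    refine second_derivative_symmetric_of_eventually (f := c) ?_ (hdfc x hx).hasFDerivAt v w'
    filter_upwards [hU.mem_nhds hx] with y hy
    exact (hdc y hy).hasFDerivAt
  -- derivative of the t-curves
  have hcurveT : ∀ τ ∈ J, ∀ t : ℝ,
      HasDerivAt (fun t' : ℝ => c (τ, t')) (pdT c (τ, t)) t := by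
    intro τ hτ t
    have hline : HasDerivAt (fun t' : ℝ => ((τ, t') : ℝ × ℝ)) ((0:ℝ), (1:ℝ)) t :=
      (hasDerivAt_const t τ).prodMk (hasDerivAt_id t)
    exact (hdc _ (hmem τ hτ t)).hasFDerivAt.comp_hasDerivAt t hline
  have hcurveS : ∀ τ ∈ J, ∀ t : ℝ,
      HasDerivAt (fun τ' : ℝ => c (τ', t)) (pdS c (τ, t)) τ := by
    intro τ hτ t
    have hline : HasDerivAt (fun τ' : ℝ => ((τ', t) : ℝ × ℝ)) ((1:ℝ), (0:ℝ)) τ :=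
      (hasDerivAt_id τ).prodMk (hasDerivAt_const τ t)
    exact (hdc _ (hmem τ hτ t)).hasFDerivAt.comp_hasDerivAt τ hline
  -- derivative in τ of h(τ,t) = ⟪(c x).2, (pdT c x).1⟫
  have hDτh : ∀ τ ∈ J, ∀ t : ℝ,
      HasDerivAt (fun τ' : ℝ => ⟪(c (τ', t)).2, (pdT c (τ', t)).1⟫) (QQ c (τ, t)) τ := by
    intro τ hτ t
    have h1 : HasDerivAt (fun τ' : ℝ => (c (τ', t)).2) ((pdS c (τ, t)).2) τ :=
      (ContinuousLinearMap.snd ℝ (Evec m) (Evec m)).hasFDerivAt.comp_hasDerivAt τ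
        (hcurveS τ hτ t)
    have hline : HasDerivAt (fun τ' : ℝ => ((τ', t) : ℝ × ℝ)) ((1:ℝ), (0:ℝ)) τ :=
      (hasDerivAt_id τ).prodMk (hasDerivAt_const τ t)
    have h2' : HasDerivAt (fun τ' : ℝ => fderiv ℝ c (τ', t))
        (fderiv ℝ (fderiv ℝ c) (τ, t) ((1:ℝ),(0:ℝ))) τ :=
      (hdfc _ (hmem τ hτ t)).hasFDerivAt.comp_hasDerivAt τ hline
    have h2'' : HasDerivAt (fun τ' : ℝ => fderiv ℝ c (τ', t) ((0:ℝ),(1:ℝ)))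
        (fderiv ℝ (fderiv ℝ c) (τ, t) ((1:ℝ),(0:ℝ)) ((0:ℝ),(1:ℝ))) τ := by
      have := h2'.clm_apply (hasDerivAt_const τ ((0:ℝ),(1:ℝ)))
      simpa using this
    have h2 : HasDerivAt (fun τ' : ℝ => (pdT c (τ', t)).1)
        ((fderiv ℝ (fderiv ℝ c) (τ, t) ((1:ℝ),(0:ℝ)) ((0:ℝ),(1:ℝ))).1) τ :=
      (ContinuousLinearMap.fst ℝ (Evec m) (Evec m)).hasFDerivAt.comp_hasDerivAt τ h2''
    have := (h1.inner ℝ h2)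
    have hswap : fderiv ℝ (fderiv ℝ c) (τ, t) ((1:ℝ),(0:ℝ)) ((0:ℝ),(1:ℝ))
        = fderiv ℝ (fderiv ℝ c) (τ, t) ((0:ℝ),(1:ℝ)) ((1:ℝ),(0:ℝ)) :=
      hsym _ (hmem τ hτ t) _ _
    rw [hswap] at this
    exact this
  -- derivative in t of b(τ,t) = ⟪(c x).2, (pdS c x).1⟫
  have hDtb : ∀ τ ∈ J, ∀ t : ℝ,
      HasDerivAt (fun t' : ℝ => ⟪(c (τ, t')).2, (pdS c (τ, t')).1⟫) (QQ c (τ, t) - κ) t := by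
    intro τ hτ t
    have h1 : HasDerivAt (fun t' : ℝ => (c (τ, t')).2) ((pdT c (τ, t)).2) t :=
      (ContinuousLinearMap.snd ℝ (Evec m) (Evec m)).hasFDerivAt.comp_hasDerivAt t
        (hcurveT τ hτ t)
    have hline : HasDerivAt (fun t' : ℝ => ((τ, t') : ℝ × ℝ)) ((0:ℝ), (1:ℝ)) t :=
      (hasDerivAt_const t τ).prodMk (hasDerivAt_id t)
    have h2' : HasDerivAt (fun t' : ℝ => fderiv ℝ c (τ, t'))
        (fderiv ℝ (fderiv ℝ c) (τ, t) ((0:ℝ),(1:ℝ))) t :=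
      (hdfc _ (hmem τ hτ t)).hasFDerivAt.comp_hasDerivAt t hline
    have h2'' : HasDerivAt (fun t' : ℝ => fderiv ℝ c (τ, t') ((1:ℝ),(0:ℝ)))
        (fderiv ℝ (fderiv ℝ c) (τ, t) ((0:ℝ),(1:ℝ)) ((1:ℝ),(0:ℝ))) t := by
      have := h2'.clm_apply (hasDerivAt_const t ((1:ℝ),(0:ℝ)))
      simpa using this
    have h2 : HasDerivAt (fun t' : ℝ => (pdS c (τ, t')).1)
        ((fderiv ℝ (fderiv ℝ c) (τ, t) ((0:ℝ),(1:ℝ)) ((1:ℝ),(0:ℝ))).1) t :=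
      (ContinuousLinearMap.fst ℝ (Evec m) (Evec m)).hasFDerivAt.comp_hasDerivAt t h2''
    have := (h1.inner ℝ h2)
    refine this.congr_deriv ?_
    have hκ' := hκ τ hτ t
    have e1 : ⟪(pdT c (τ,t)).1, (pdS c (τ,t)).2⟫ = ⟪(pdS c (τ,t)).2, (pdT c (τ,t)).1⟫ :=
      real_inner_comm _ _
    have e2 : ⟪(pdS c (τ,t)).1, (pdT c (τ,t)).2⟫ = ⟪(pdT c (τ,t)).2, (pdS c (τ,t)).1⟫ :=
      real_inner_comm _ _
    rw [QQ]
    linarith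
  -- continuity facts
  have hc2 : ContDiffOn ℝ (⊤ : ℕ∞) (fderiv ℝ (fderiv ℝ c)) U := hc1.fderiv_of_isOpen hU (by simp)
  have contc : ContinuousOn c U := hc.continuousOn
  have cont1 : ContinuousOn (fderiv ℝ c) U := hc1.continuousOn
  have cont2 : ContinuousOn (fderiv ℝ (fderiv ℝ c)) U := hc2.continuousOn
  have contT1 : ContinuousOn (fun x => (pdT c x).1) U := by
    exact continuous_fst.comp_continuousOn (cont1.clm_apply continuousOn_const)
  have contQ : ContinuousOn (QQ c) U := by
    unfold QQ
    apply ContinuousOn.add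
    · exact ContinuousOn.inner (continuous_snd.comp_continuousOn contc)
        (continuous_fst.comp_continuousOn
          ((cont2.clm_apply continuousOn_const).clm_apply continuousOn_const))
    · exact ContinuousOn.inner
        (continuous_snd.comp_continuousOn (cont1.clm_apply continuousOn_const)) contT1
  have conth : ContinuousOn (fun x => ⟪(c x).2, (pdT c x).1⟫) U :=
    ContinuousOn.inner (continuous_snd.comp_continuousOn contc) contT1
  have memIcc : ∀ x : ℝ, x ∈ Set.uIcc (0:ℝ) 1 → x ∈ J := by
    intro x hx
    rw [Set.uIcc_of_le zero_le_one] at hx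
    exact hIcc hx
  -- the function h along horizontal lines, continuity
  have hHcont : ∀ τ ∈ J, Continuous (fun t : ℝ => ⟪(c (τ,t)).2, (pdT c (τ,t)).1⟫) := by
    intro τ hτ
    exact conth.comp_continuous (continuous_const.prodMk continuous_id)
      (fun t => hmem τ hτ t)
  have hQlineT : ∀ τ ∈ J, Continuous (fun t : ℝ => QQ c (τ,t)) := by
    intro τ hτ
    exact contQ.comp_continuous (continuous_const.prodMk continuous_id) (fun t => hmem τ hτ t)
  have hQlineS : ∀ t : ℝ, ContinuousOn (fun τ : ℝ => QQ c (τ,t)) J := by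
    intro t
    exact contQ.comp (continuous_id.prodMk continuous_const).continuousOn
      (fun τ hτ => hmem τ hτ t)
  -- key 1 : FTC in the deformation variable
  have key1 : ∀ t : ℝ, ⟪(c (1,t)).2, (pdT c (1,t)).1⟫ - ⟪(c (0,t)).2, (pdT c (0,t)).1⟫
      = ∫ τ in (0:ℝ)..1, QQ c (τ, t) := by
    intro t
    refine (intervalIntegral.integral_eq_sub_of_hasDerivAt
      (fun τ hτ => hDτh τ (memIcc τ hτ) t) ?_).symm
    exact ((hQlineS t).mono (fun x hx => memIcc x hx)).intervalIntegrable
  -- boundary : pdS agrees at t = 0, 1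
  have bS : ∀ τ ∈ J, pdS c (τ,1) = pdS c (τ,0) := by
    intro τ hτ
    have d1 : HasDerivAt (fun τ' => c (τ',1)) (pdS c (τ,1)) τ := hcurveS τ hτ 1
    have d0 : HasDerivAt (fun τ' => c (τ',0) + ((w,(0:Evec m)) : Evec m × Evec m))
        (pdS c (τ,0)) τ := (hcurveS τ hτ 0).add_const _
    have heq : (fun τ' => c (τ',0) + ((w,(0:Evec m)) : Evec m × Evec m))
        =ᶠ[nhds τ] (fun τ' => c (τ',1)) := by
      filter_upwards [hJ.mem_nhds hτ] with y hy
      exact (hb y hy).symm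
    exact d1.unique (d0.congr_of_eventuallyEq heq.symm)
  -- key 2 : FTC in the time variable
  have key2 : ∀ τ ∈ J, (∫ t in (0:ℝ)..1, QQ c (τ,t)) = κ := by
    intro τ hτ
    have hder : ∀ t ∈ Set.uIcc (0:ℝ) 1,
        HasDerivAt (fun t' : ℝ => κ * t' + ⟪(c (τ, t')).2, (pdS c (τ, t')).1⟫)
          (QQ c (τ,t)) t := by
      intro t _
      have h1 : HasDerivAt (fun t' : ℝ => κ * t') κ t := by
        simpa using (hasDerivAt_id t).const_mul κ
      have := h1.add (hDtb τ hτ t)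
      refine this.congr_deriv ?_
      ring
    have hint : IntervalIntegrable (fun t => QQ c (τ,t)) MeasureTheory.volume 0 1 :=
      (hQlineT τ hτ).intervalIntegrable _ _
    have := intervalIntegral.integral_eq_sub_of_hasDerivAt hder hint
    rw [this]
    have e2 : (c (τ,1)).2 = (c (τ,0)).2 := by rw [hb τ hτ]; simp
    rw [e2, bS τ hτ]
    ring
  -- rewrite the goal using pdT
  have hderiv1 : ∀ t : ℝ, deriv (fun t' : ℝ => c (1, t')) t = pdT c (1,t) :=
    fun t => (hcurveT 1 h1J t).deriv
  have hderiv0 : ∀ t : ℝ, deriv (fun t' : ℝ => c (0, t')) t = pdT c (0,t) :=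
    fun t => (hcurveT 0 h0J t).deriv
  simp only [hderiv1, hderiv0]
  -- Fubini
  have hIntProd : MeasureTheory.IntegrableOn (fun p : ℝ × ℝ => QQ c (p.2, p.1))
      (Set.Ioc (0:ℝ) 1 ×ˢ Set.Ioc (0:ℝ) 1) MeasureTheory.volume := by
    apply MeasureTheory.IntegrableOn.mono_set
      (t := (Set.Icc (0:ℝ) 1 ×ˢ Set.Icc (0:ℝ) 1))
    · apply ContinuousOn.integrableOn_compact (isCompact_Icc.prod isCompact_Icc)
      apply contQ.comp continuous_swap.continuousOn
      intro p hp
      exact hmem p.2 (hIcc hp.2) p.1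
    · exact Set.prod_mono Set.Ioc_subset_Icc_self Set.Ioc_subset_Icc_self
  have hswapint : (∫ t in Set.Ioc (0:ℝ) 1, ∫ τ in Set.Ioc (0:ℝ) 1, QQ c (τ, t))
      = ∫ τ in Set.Ioc (0:ℝ) 1, ∫ t in Set.Ioc (0:ℝ) 1, QQ c (τ, t) := by
    apply MeasureTheory.integral_integral_swap (f := fun t τ => QQ c (τ, t))
    rw [MeasureTheory.Measure.prod_restrict]
    exact hIntProd
  have intgh1 : IntervalIntegrable (fun t => ⟪(c (1,t)).2, (pdT c (1,t)).1⟫)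
      MeasureTheory.volume 0 1 := (hHcont 1 h1J).intervalIntegrable _ _
  have intgh0 : IntervalIntegrable (fun t => ⟪(c (0,t)).2, (pdT c (0,t)).1⟫)
      MeasureTheory.volume 0 1 := (hHcont 0 h0J).intervalIntegrable _ _
  calc (∫ t in (0:ℝ)..1, ⟪(c (1,t)).2, (pdT c (1,t)).1⟫)
        - ∫ t in (0:ℝ)..1, ⟪(c (0,t)).2, (pdT c (0,t)).1⟫
      = ∫ t in (0:ℝ)..1,
          (⟪(c (1,t)).2, (pdT c (1,t)).1⟫ - ⟪(c (0,t)).2, (pdT c (0,t)).1⟫) :=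
        (intervalIntegral.integral_sub intgh1 intgh0).symm
    _ = ∫ t in (0:ℝ)..1, ∫ τ in (0:ℝ)..1, QQ c (τ, t) :=
        intervalIntegral.integral_congr (fun t _ => key1 t)
    _ = ∫ τ in (0:ℝ)..1, ∫ t in (0:ℝ)..1, QQ c (τ, t) := by
        simp only [intervalIntegral.integral_of_le zero_le_one]
        exact hswapint
    _ = ∫ _ in (0:ℝ)..1, κ :=
        intervalIntegral.integral_congr (fun τ hτ => key2 τ (memIcc τ hτ))
    _ = κ := by simp

end Core

/-! ### the action integral -/

def IuInt {n : ℕ} (φ : Evec (n+1) × Evec (n+1) → Evec (n+1) × Evec (n+1)) (u : Evec (n+1)) : ℝ :=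
  ∫ t in (0:ℝ)..1, ⟪(φ (t • sVec n, u)).2, (deriv (fun t' : ℝ => φ (t' • sVec n, u)) t).1⟫

lemma appI {n : ℕ} {D W : Set (Evec (n+1))}
    {φ : Evec (n+1) × Evec (n+1) → Evec (n+1) × Evec (n+1)}
    (hemb : IsTrivialSympEmb D W φ) (hDo : IsOpen D) (hDc : Convex ℝ D)
    {u u' : Evec (n+1)} (hu : u ∈ D) (hu' : u' ∈ D) :
    IuInt φ u' - IuInt φ u = ⟪sVec n, u' - u⟫ := by
  set v : Evec (n+1) := u' - u with hv
  set c : ℝ × ℝ → Evec (n+1) × Evec (n+1) :=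
    fun x => φ (x.2 • sVec n, u + x.1 • v) with hcdef
  set J : Set ℝ := {τ : ℝ | u + τ • v ∈ D} with hJdef
  have hJ : IsOpen J := by
    have hco : Continuous (fun τ : ℝ => u + τ • v) := by continuity
    exact hDo.preimage hco
  have hIcc : Set.Icc (0:ℝ) 1 ⊆ J := by
    intro τ hτ
    have h1 : u + τ • v = (1 - τ) • u + τ • u' := by rw [hv]; module
    show u + τ • v ∈ D
    rw [h1]
    exact hDc hu hu' (by linarith [hτ.2]) hτ.1 (by ring)
  have hmemD : ∀ τ ∈ J, (u + τ • v) ∈ D := fun τ hτ => hτ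
  have hG : ContDiff ℝ (⊤ : ℕ∞) (fun x : ℝ × ℝ => (x.2 • sVec n, u + x.1 • v)) :=
    ContDiff.prodMk (contDiff_snd.smul contDiff_const) (contDiff_const.add (contDiff_fst.smul contDiff_const))
  have hc : ContDiffOn ℝ (⊤ : ℕ∞) c (J ×ˢ (Set.univ : Set ℝ)) := by
    refine hemb.smooth.comp hG.contDiffOn ?_
    intro x hx
    exact ⟨trivial, hx.1⟩
  set L : ℝ × ℝ →L[ℝ] Evec (n+1) × Evec (n+1) :=
    ((ContinuousLinearMap.snd ℝ ℝ ℝ).smulRight (sVec n)).prod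
      ((ContinuousLinearMap.fst ℝ ℝ ℝ).smulRight v) with hLdef
  have hGL : ∀ x : ℝ × ℝ, HasFDerivAt (fun x : ℝ × ℝ => (x.2 • sVec n, u + x.1 • v)) L x := by
    intro x
    apply HasFDerivAt.prodMk
    · exact ((ContinuousLinearMap.snd ℝ ℝ ℝ).smulRight (sVec n)).hasFDerivAt
    · exact (((ContinuousLinearMap.fst ℝ ℝ ℝ).smulRight v).hasFDerivAt).const_add u
  have hφd : ∀ p ∈ D, ∀ q, DifferentiableAt ℝ φ (q, p) := by
    intro p hp q
    have hopen : IsOpen ((Set.univ : Set (Evec (n+1))) ×ˢ D) := isOpen_univ.prod hDo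
    exact (hemb.smooth.contDiffAt (hopen.mem_nhds ⟨trivial, hp⟩)).differentiableAt (by simp)
  have hfc : ∀ τ ∈ J, ∀ t : ℝ,
      fderiv ℝ c (τ, t) = (fderiv ℝ φ (t • sVec n, u + τ • v)).comp L := by
    intro τ hτ t
    have h := ((hφd _ (hmemD τ hτ) (t • sVec n)).hasFDerivAt.comp ((τ, t) : ℝ × ℝ) (hGL (τ, t)))
    exact h.fderiv
  have hL01 : L ((0:ℝ), (1:ℝ)) = (sVec n, (0 : Evec (n+1))) := by
    rw [hLdef]
    ext x <;> simp
  have hL10 : L ((1:ℝ), (0:ℝ)) = ((0 : Evec (n+1)), v) := by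
    rw [hLdef]
    ext x <;> simp
  have hκ : ∀ τ ∈ J, ∀ t : ℝ,
      ⟪(pdT c (τ, t)).1, (pdS c (τ, t)).2⟫ - ⟪(pdS c (τ, t)).1, (pdT c (τ, t)).2⟫
        = ⟪sVec n, v⟫ := by
    intro τ hτ t
    have e1 : pdT c (τ, t) = fderiv ℝ φ (t • sVec n, u + τ • v) (sVec n, (0 : Evec (n+1))) := by
      rw [pdT, hfc τ hτ t, ContinuousLinearMap.comp_apply, hL01]
    have e2 : pdS c (τ, t) = fderiv ℝ φ (t • sVec n, u + τ • v) ((0 : Evec (n+1)), v) := by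
      rw [pdS, hfc τ hτ t, ContinuousLinearMap.comp_apply, hL10]
    have h := hemb.symplectic (t • sVec n) _ (hmemD τ hτ) (sVec n, (0 : Evec (n+1)))
      ((0 : Evec (n+1)), v)
    rw [e1, e2]
    rw [omega0, omega0] at h
    simpa using h
  have hb : ∀ τ ∈ J, c (τ, 1) = c (τ, 0) + (sVec n, (0 : Evec (n+1))) := by
    intro τ hτ
    have h := hemb.equivariant 0 _ (hmemD τ hτ) (kVec n)
    rw [zero_add, intVec_kVec] at h
    show φ ((1:ℝ) • sVec n, u + τ • v) = φ ((0:ℝ) • sVec n, u + τ • v) + (sVec n, 0)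
    rw [one_smul, zero_smul]
    exact h
  have hcore := core_lemma hJ hIcc hc hb hκ
  have huv1 : u + (1:ℝ) • v = u' := by rw [hv]; module
  have huv0 : u + (0:ℝ) • v = u := by module
  rw [IuInt, IuInt]
  simp only [hcdef] at hcore
  simp only [huv1, huv0] at hcore
  exact hcore

lemma appII {n : ℕ} {D W : Set (Evec (n+1))}
    {φ : Evec (n+1) × Evec (n+1) → Evec (n+1) × Evec (n+1)}
    (hemb : IsTrivialSympEmb D W φ) (hDo : IsOpen D)
    {u : Evec (n+1)} (hu : u ∈ D) (hsec : IsSmoothSection φ u) :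
    ∃ g : ℝ → Evec (n+1), Continuous g ∧ (∀ t, g t ∈ W) ∧
      IuInt φ u = ∫ t in (0:ℝ)..1, ⟪g t, sVec n⟫ := by
  obtain ⟨σ, hσsm, hper, hgraph⟩ := hsec
  have hPX : ∀ q, (φ (q, u)).2 = σ ((φ (q, u)).1) := by
    intro q
    have hmem : φ (q, u) ∈ (fun x => (x, σ x)) '' Set.univ := by
      rw [← hgraph]; exact ⟨q, trivial, rfl⟩
    obtain ⟨x, -, hx⟩ := hmem
    rw [← hx]
  have hXs : ∀ y, ∃ q, φ (q, u) = (y, σ y) := by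
    intro y
    have hmem : ((y, σ y) : Evec (n+1) × Evec (n+1)) ∈ (fun q => φ (q, u)) '' Set.univ := by
      rw [hgraph]; exact ⟨y, trivial, rfl⟩
    obtain ⟨q, -, hq⟩ := hmem
    exact ⟨q, hq⟩
  have hσW : ∀ y, σ y ∈ W := by
    intro y
    obtain ⟨q, hq⟩ := hXs y
    have h := hemb.image_sub q u hu
    rw [hq] at h
    exact h
  have hσd : Differentiable ℝ σ := hσsm.differentiable (by simp)
  have hφd : ∀ q, DifferentiableAt ℝ φ (q, u) := by
    intro q
    have hopen : IsOpen ((Set.univ : Set (Evec (n+1))) ×ˢ D) := isOpen_univ.prod hDo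
    exact (hemb.smooth.contDiffAt (hopen.mem_nhds ⟨trivial, hu⟩)).differentiableAt (by simp)
  -- symmetry of the derivative of σ
  have hsymσ : ∀ y a b, ⟪a, fderiv ℝ σ y b⟫ = ⟪b, fderiv ℝ σ y a⟫ := by
    intro y a' b'
    obtain ⟨q, hq⟩ := hXs y
    have hy : (φ (q, u)).1 = y := by rw [hq]
    have hincl : HasFDerivAt (fun q' : Evec (n+1) => ((q', u) : Evec (n+1) × Evec (n+1)))
        ((ContinuousLinearMap.id ℝ (Evec (n+1))).prod 0) q :=
      (hasFDerivAt_id q).prodMk (hasFDerivAt_const u q)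
    have hψ : HasFDerivAt (fun q' => φ (q', u))
        ((fderiv ℝ φ (q, u)).comp ((ContinuousLinearMap.id ℝ (Evec (n+1))).prod 0)) q :=
      (hφd q).hasFDerivAt.comp q hincl
    set M : Evec (n+1) →L[ℝ] Evec (n+1) :=
      (ContinuousLinearMap.fst ℝ (Evec (n+1)) (Evec (n+1))).comp
        ((fderiv ℝ φ (q, u)).comp ((ContinuousLinearMap.id ℝ (Evec (n+1))).prod 0)) with hM
    have hX : HasFDerivAt (fun q' => (φ (q', u)).1) M q :=
      (ContinuousLinearMap.fst ℝ (Evec (n+1)) (Evec (n+1))).hasFDerivAt.comp q hψ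
    have hψeq : (fun q' => φ (q', u)) = fun q' => ((φ (q', u)).1, σ ((φ (q', u)).1)) := by
      funext q'
      rw [← hPX q']
    have hσX : HasFDerivAt (fun q' => σ ((φ (q', u)).1)) ((fderiv ℝ σ y).comp M) q := by
      have h := (hσd ((φ (q, u)).1)).hasFDerivAt.comp q hX
      rwa [hy] at h
    have hψ2 : HasFDerivAt (fun q' => φ (q', u)) (M.prod ((fderiv ℝ σ y).comp M)) q := by
      rw [hψeq]
      exact hX.prodMk hσX
    have hLeq := hψ.unique hψ2
    have hDφa : ∀ a, fderiv ℝ φ (q, u) ((a, 0) : Evec (n+1) × Evec (n+1))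
        = (M a, fderiv ℝ σ y (M a)) := by
      intro a
      have h := congrArg (fun (T : Evec (n+1) →L[ℝ] Evec (n+1) × Evec (n+1)) => T a) hLeq
      simpa using h
    have hMinj : Function.Injective M := by
      intro a b hab
      have hz0 : M (a - b) = 0 := by rw [map_sub, hab, sub_self]
      have h0 : fderiv ℝ φ (q, u) ((a - b, 0) : Evec (n+1) × Evec (n+1)) = 0 := by
        rw [hDφa, hz0]
        simp
      have hsp := hemb.symplectic q u hu ((a - b, 0) : Evec (n+1) × Evec (n+1))
        ((0, a - b) : Evec (n+1) × Evec (n+1))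
      rw [h0, omega0, omega0] at hsp
      simp only [Prod.fst_zero, Prod.snd_zero, inner_zero_left, inner_zero_right, sub_zero,
        zero_sub, neg_eq_zero] at hsp
      have hinner : ⟪a - b, a - b⟫ = (0:ℝ) := hsp.symm
      have hz : a - b = 0 := inner_self_eq_zero.mp hinner
      exact sub_eq_zero.mp hz
    have hMsurj : Function.Surjective M := by
      have hinj : Function.Injective (M : Evec (n+1) →ₗ[ℝ] Evec (n+1)) := hMinj
      exact LinearMap.injective_iff_surjective.mp hinj
    obtain ⟨a, ha⟩ := hMsurj a'
    obtain ⟨b, hb⟩ := hMsurj b'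
    have hsp := hemb.symplectic q u hu ((a, 0) : Evec (n+1) × Evec (n+1))
      ((b, 0) : Evec (n+1) × Evec (n+1))
    rw [hDφa, hDφa, omega0, omega0] at hsp
    simp only [inner_zero_right, sub_zero, sub_self] at hsp
    rw [← ha, ← hb]
    linarith [hsp]
  -- the homotopy
  set z : Evec (n+1) := (φ ((0 : Evec (n+1)), u)).1 with hzdef
  set Hf : ℝ × ℝ → Evec (n+1) :=
    (fun x => (1 - x.1) • (φ (x.2 • sVec n, u)).1 + x.1 • (z + x.2 • sVec n)) with hHf
  have hφcurve : ContDiff ℝ (⊤ : ℕ∞) (fun x : ℝ × ℝ => φ (x.2 • sVec n, u)) := by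
    rw [← contDiffOn_univ]
    refine hemb.smooth.comp
      (ContDiff.prodMk (contDiff_snd.smul contDiff_const) contDiff_const).contDiffOn ?_
    exact fun x _ => ⟨trivial, hu⟩
  have hHsm : ContDiff ℝ (⊤ : ℕ∞) Hf :=
    ((contDiff_const.sub contDiff_fst).smul hφcurve.fst).add
      (contDiff_fst.smul (contDiff_const.add (contDiff_snd.smul contDiff_const)))
  set c : ℝ × ℝ → Evec (n+1) × Evec (n+1) := fun x => (Hf x, σ (Hf x)) with hcdef
  have hcsm : ContDiff ℝ (⊤ : ℕ∞) c := hHsm.prodMk (hσsm.comp hHsm)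
  have hfc : ∀ x : ℝ × ℝ, fderiv ℝ c x
      = (fderiv ℝ Hf x).prod ((fderiv ℝ σ (Hf x)).comp (fderiv ℝ Hf x)) := by
    intro x
    exact ((hHsm.differentiable (by simp) x).hasFDerivAt.prodMk
      ((hσd _).hasFDerivAt.comp x (hHsm.differentiable (by simp) x).hasFDerivAt)).fderiv
  have hκ : ∀ τ ∈ (Set.univ : Set ℝ), ∀ t : ℝ,
      ⟪(pdT c (τ, t)).1, (pdS c (τ, t)).2⟫ - ⟪(pdS c (τ, t)).1, (pdT c (τ, t)).2⟫ = (0:ℝ) := by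
    intro τ _ t
    rw [pdT, pdS, hfc]
    simp only [ContinuousLinearMap.prod_apply, ContinuousLinearMap.comp_apply]
    rw [hsymσ]
    ring
  have hb : ∀ τ ∈ (Set.univ : Set ℝ), c (τ, 1) = c (τ, 0) + (sVec n, (0 : Evec (n+1))) := by
    intro τ _
    have heqv := hemb.equivariant 0 u hu (kVec n)
    rw [zero_add, intVec_kVec] at heqv
    have h1 : Hf (τ, 1) = Hf (τ, 0) + sVec n := by
      rw [hHf]
      show (1 - τ) • (φ ((1:ℝ) • sVec n, u)).1 + τ • (z + (1:ℝ) • sVec n)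
          = ((1 - τ) • (φ ((0:ℝ) • sVec n, u)).1 + τ • (z + (0:ℝ) • sVec n)) + sVec n
      rw [one_smul, zero_smul, heqv]
      show (1 - τ) • ((φ (0, u)).1 + sVec n) + τ • (z + sVec n) = _
      rw [← hzdef]
      module
    have h2 : σ (Hf (τ, 1)) = σ (Hf (τ, 0)) := by
      rw [h1, ← intVec_kVec]
      exact hper _ _
    show (Hf (τ, 1), σ (Hf (τ, 1))) = (Hf (τ, 0), σ (Hf (τ, 0))) + (sVec n, 0)
    rw [h2, h1]
    exact Prod.ext rfl (by simp)
  have hcore := core_lemma isOpen_univ (Set.subset_univ _) hcsm.contDiffOn hb hκ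
  have hcur1 : (fun t' : ℝ => c (1, t'))
      = fun t' : ℝ => ((z + t' • sVec n, σ (z + t' • sVec n)) : Evec (n+1) × Evec (n+1)) := by
    funext t'
    simp only [hcdef, hHf]
    norm_num
  have hcur0 : (fun t' : ℝ => c (0, t')) = fun t' : ℝ => φ (t' • sVec n, u) := by
    funext t'
    simp only [hcdef, hHf]
    rw [sub_zero, one_smul, zero_smul, add_zero]
    rw [← hPX]
  refine ⟨fun t => σ (z + t • sVec n),
    hσsm.continuous.comp (continuous_const.add (continuous_id.smul continuous_const)),
    fun t => hσW _, ?_⟩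
  have hIu : IuInt φ u = ∫ t in (0:ℝ)..1, ⟪(c (0, t)).2, (deriv (fun t' : ℝ => c (0, t')) t).1⟫ := by
    rw [IuInt]
    refine intervalIntegral.integral_congr (fun t _ => ?_)
    rw [hcur0, show c ((0:ℝ), t) = φ (t • sVec n, u) from congrFun hcur0 t]
  have hI1 : (∫ t in (0:ℝ)..1, ⟪(c (1, t)).2, (deriv (fun t' : ℝ => c (1, t')) t).1⟫)
      = ∫ t in (0:ℝ)..1, ⟪σ (z + t • sVec n), sVec n⟫ := by
    refine intervalIntegral.integral_congr (fun t _ => ?_)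
    rw [hcur1, show c ((1:ℝ), t) = ((z + t • sVec n, σ (z + t • sVec n)) : Evec (n+1) × Evec (n+1))
      from congrFun hcur1 t]
    have hd : HasDerivAt (fun t' : ℝ => ((z + t' • sVec n, σ (z + t' • sVec n))
        : Evec (n+1) × Evec (n+1)))
        ((sVec n, fderiv ℝ σ (z + t • sVec n) (sVec n))) t := by
      have h1 : HasDerivAt (fun t' : ℝ => z + t' • sVec n) (sVec n) t := by
        simpa using ((hasDerivAt_id t).smul_const (sVec n)).const_add z
      exact h1.prodMk ((hσd _).hasFDerivAt.comp_hasDerivAt t h1)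
    rw [hd.deriv]
  linarith [hcore, hIu, hI1]


/-- Nonsqueezing for `P²ⁿ(s) = 𝕋ⁿ × Δⁿ(s)` into `Y²ⁿ(r) = 𝕋ⁿ × (0,r) × (0,∞)ⁿ⁻¹`:
there is a `π̃₁`-trivial symplectic embedding mapping each `𝕋ⁿ × {u}` to a smooth
section if and only if `s ≤ r`. -/
theorem nonsqueezing_simplex_into_halfslab {n : ℕ} (s r : ℝ) (hs : 0 < s) (hr : 0 < r) :
    (∃ φ : Evec (n + 1) × Evec (n + 1) → Evec (n + 1) × Evec (n + 1),
      IsTrivialSympEmb (openSimplex (n + 1) s)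
        {p : Evec (n + 1) | p 0 ∈ Set.Ioo 0 r ∧ ∀ i, i ≠ 0 → 0 < p i} φ ∧
      ∀ u ∈ openSimplex (n + 1) s, IsSmoothSection φ u) ↔ s ≤ r := by
  constructor
  · rintro ⟨φ, hemb, hsec⟩
    by_contra hsr
    push_neg at hsr
    have hN0 : (0:ℝ) ≤ (n : ℝ) := Nat.cast_nonneg n
    set N : ℝ := (n : ℝ) with hNdef
    set ε : ℝ := (s - r) / (N + 3) with hεdef
    have hεpos : 0 < ε := div_pos (by linarith) (by linarith)
    have hεid : ε * (N + 3) = s - r := by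
      rw [hεdef]
      field_simp
    set lam : ℝ := s - (N + 2) * ε with hlamdef
    have hlamr : r < lam := by nlinarith [hεid]
    set u : Evec (n+1) := WithLp.toLp 2 (fun _ => ε : Fin (n+1) → ℝ) with hudef
    set u' : Evec (n+1) := u + lam • sVec n with hu'def
    have huapp : ∀ i, u i = ε := fun i => rfl
    have hu'app : ∀ i, u' i = ε + lam * (if i = 0 then 1 else 0) := by
      intro i
      rw [hu'def]
      rw [PiLp.add_apply, PiLp.smul_apply, smul_eq_mul]
      rw [huapp i]
      congr 1
      rw [sVec, EuclideanSpace.single_apply]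
    have hsumu : ∑ i, u i = (N + 1) * ε := by
      rw [show (∑ i, u i) = ∑ _i : Fin (n+1), ε from Finset.sum_congr rfl (fun i _ => huapp i)]
      rw [Finset.sum_const, Finset.card_univ, Fintype.card_fin, nsmul_eq_mul]
      push_cast
      ring
    have humem : u ∈ openSimplex (n+1) s := by
      constructor
      · intro i
        rw [huapp i]
        exact hεpos
      · rw [hsumu]
        nlinarith [hεid]
    have hsumu' : ∑ i, u' i = (N + 1) * ε + lam := by
      simp only [hu'app]
      rw [Finset.sum_add_distrib]
      simp only [← Finset.mul_sum]
      rw [Finset.sum_ite_eq' Finset.univ (0 : Fin (n+1)) (fun _ => (1:ℝ))]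
      simp only [Finset.sum_const, Finset.card_univ, Fintype.card_fin, nsmul_eq_mul,
        Finset.mem_univ, if_true]
      push_cast
      ring
    have hu'mem : u' ∈ openSimplex (n+1) s := by
      constructor
      · intro i
        rw [hu'app]
        rcases eq_or_ne i 0 with h | h
        · rw [if_pos h]
          nlinarith
        · rw [if_neg h]
          nlinarith
      · rw [hsumu']
        nlinarith [hεid]
    have hDo := isOpen_openSimplex (n+1) s
    have hDc := convex_openSimplex (n+1) s
    obtain ⟨g, hgc, hgW, hgeq⟩ := appII hemb hDo humem (hsec u humem)
    obtain ⟨g', hgc', hgW', hgeq'⟩ := appII hemb hDo hu'mem (hsec u' hu'mem)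
    have hdiff := appI hemb hDo hDc humem hu'mem
    have hinner : ⟪sVec n, u' - u⟫ = lam := by
      rw [hu'def, add_sub_cancel_left, real_inner_smul_right]
      rw [show ⟪sVec n, sVec n⟫ = (1:ℝ) from by
        simp [sVec, EuclideanSpace.inner_single_right, EuclideanSpace.single_apply]]
      ring
    have hb1 : IuInt φ u' ≤ r := by
      rw [hgeq']
      have hint : Continuous (fun t : ℝ => ⟪g' t, sVec n⟫) := hgc'.inner continuous_const
      calc (∫ t in (0:ℝ)..1, ⟪g' t, sVec n⟫) ≤ ∫ _ in (0:ℝ)..1, r := by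
            apply intervalIntegral.integral_mono_on zero_le_one (hint.intervalIntegrable 0 1)
              intervalIntegrable_const
            intro t _
            rw [show ⟪g' t, sVec n⟫ = g' t 0 from by
              simp [sVec, EuclideanSpace.inner_single_right]]
            exact le_of_lt (hgW' t).1.2
        _ = r := by simp
    have hb0 : 0 ≤ IuInt φ u := by
      rw [hgeq]
      apply intervalIntegral.integral_nonneg zero_le_one
      intro t _
      rw [show ⟪g t, sVec n⟫ = g t 0 from by
        simp [sVec, EuclideanSpace.inner_single_right]]
      exact le_of_lt (hgW t).1.1
    rw [hinner] at hdiff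
    linarith
  · intro hsr
    refine ⟨id, ⟨contDiff_id.contDiffOn, ?_, ?_, ?_, ?_⟩, ?_⟩
    · intro q p hp k
      simp [Prod.ext_iff]
    · intro q q' p hp p' hp' ⟨k, hk⟩
      rw [id_eq, id_eq, Prod.mk_sub_mk, Prod.mk.injEq] at hk
      exact ⟨⟨k, hk.1⟩, sub_eq_zero.mp hk.2⟩
    · intro q p hp uu ww
      rw [show fderiv ℝ (id : Evec (n+1) × Evec (n+1) → Evec (n+1) × Evec (n+1)) (q, p)
        = ContinuousLinearMap.id ℝ _ from fderiv_id]
      rfl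
    · intro q p hp
      simp only [id_eq]
      refine ⟨⟨hp.1 0, ?_⟩, fun i _ => hp.1 i⟩
      have h1 : p 0 ≤ ∑ i, p i :=
        Finset.single_le_sum (fun i _ => le_of_lt (hp.1 i)) (Finset.mem_univ 0)
      linarith [hp.2]
    · intro u hu
      exact ⟨fun _ => u, contDiff_const, fun _ _ => rfl, rfl⟩
end
end

section
/- Let A be the 2×2 integer matrix with rows (2,1) and (1,1), and let v ∈ ℝ² be a unit eigenvector of A with eigenvalue (3+√5)/2. Then for every bounded set U ⊆ ℝ² and every r > 0 there exists N such that for all n ≥ N and all p ∈ U, |⟨A⁻ⁿp, v⟩| < r; equivalently, A⁻ⁿ(U) is contained in the slab {sv + w : |s| < r, w ⟂ v}. Consequently, for every bounded domain U ⊆ ℝ² and r > 0, the symplectic map Φ_A : 𝕋² × ℝ² → 𝕋² × ℝ², ([x],y) ↦ ([Ax], A⁻¹y), satisfies Φ_Aⁿ(𝕋² × U) ⊆ 𝕋² × {sv + w : |s| < r, w ⟂ v} for all sufficiently large n. -/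
open Matrix

/-- Symplectic squeezing into the tilted cylinder `Y⁴(r,v)`: for the matrix
`A = !![2,1;1,1]` and `v` a unit eigenvector for the eigenvalue `(3+√5)/2`, the iterates
`A⁻ⁿ` squeeze every bounded set into the slab `{p : |⟨p,v⟩| < r}`; equivalently,
`Φ_Aⁿ(𝕋² × U) ⊆ Y⁴(r,v)` for all large `n`. -/
theorem squeezing_into_tilted_cylinder
    (v : Fin 2 → ℝ) (hv_unit : v 0 ^ 2 + v 1 ^ 2 = 1)
    (hv_eig : (!![2, 1; 1, 1] : Matrix (Fin 2) (Fin 2) ℝ) *ᵥ v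
      = ((3 + Real.sqrt 5) / 2) • v)
    (U : Set (Fin 2 → ℝ)) (hU : Bornology.IsBounded U) (r : ℝ) (hr : 0 < r) :
    ∃ N : ℕ, ∀ n ≥ N, ∀ p ∈ U,
      |((!![2, 1; 1, 1] : Matrix (Fin 2) (Fin 2) ℝ)⁻¹ ^ n *ᵥ p) ⬝ᵥ v| < r := by
  set A : Matrix (Fin 2) (Fin 2) ℝ := !![2, 1; 1, 1] with hA
  set lam : ℝ := (3 + Real.sqrt 5) / 2 with hlam
  have hsqrt : (0:ℝ) ≤ Real.sqrt 5 := Real.sqrt_nonneg 5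
  have hlam1 : 1 < lam := by rw [hlam]; nlinarith
  have hlam0 : (0:ℝ) < lam := by linarith
  set B : Matrix (Fin 2) (Fin 2) ℝ := !![1, -1; -1, 2] with hB
  have hAB : A * B = 1 := by
    ext i j
    fin_cases i <;> fin_cases j <;>
      simp [hA, hB, Matrix.mul_apply, Fin.sum_univ_two] <;> norm_num
  have hBA : B * A = 1 := by
    ext i j
    fin_cases i <;> fin_cases j <;>
      simp [hA, hB, Matrix.mul_apply, Fin.sum_univ_two] <;> norm_num
  have hAinv : A⁻¹ = B := Matrix.inv_eq_right_inv hAB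
  have hBT : B.transpose = B := by
    ext i j; fin_cases i <;> fin_cases j <;> simp [hB]
  -- B *ᵥ v = lam⁻¹ • v
  have hBv : B *ᵥ v = lam⁻¹ • v := by
    have h1 : B *ᵥ (A *ᵥ v) = v := by
      rw [Matrix.mulVec_mulVec, hBA, Matrix.one_mulVec]
    rw [hv_eig, Matrix.mulVec_smul] at h1
    have : lam⁻¹ • (lam • (B *ᵥ v)) = lam⁻¹ • v := by rw [h1]
    rwa [smul_smul, inv_mul_cancel₀ (ne_of_gt hlam0), one_smul] at this
  have hBnv : ∀ n : ℕ, (B ^ n) *ᵥ v = (lam⁻¹ ^ n) • v := by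
    intro n
    induction n with
    | zero => simp
    | succ n ih =>
      rw [pow_succ, ← Matrix.mulVec_mulVec, hBv, Matrix.mulVec_smul, ih,
        smul_smul, pow_succ, mul_comm]
  -- dot product identity
  have hdot : ∀ n : ℕ, ∀ p : Fin 2 → ℝ,
      ((B ^ n) *ᵥ p) ⬝ᵥ v = lam⁻¹ ^ n * (p ⬝ᵥ v) := by
    intro n p
    have h1 : ((B ^ n) *ᵥ p) ⬝ᵥ v = p ⬝ᵥ ((B ^ n).transpose *ᵥ v) := by
      rw [dotProduct_comm, Matrix.dotProduct_mulVec,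
        ← Matrix.mulVec_transpose, dotProduct_comm]
    rw [h1, Matrix.transpose_pow, hBT, hBnv, dotProduct_smul, smul_eq_mul]
  -- bound on U
  obtain ⟨C, hC⟩ := hU.exists_norm_le
  set M : ℝ := 2 * max C 0 + 1 with hM
  have hM0 : 0 < M := by positivity
  have hpv : ∀ p ∈ U, |p ⬝ᵥ v| < M := by
    intro p hp
    have hnorm := hC p hp
    have h0 : |p 0| ≤ C := le_trans (norm_le_pi_norm p 0) hnorm
    have h1 : |p 1| ≤ C := le_trans (norm_le_pi_norm p 1) hnorm
    have hv0 : |v 0| ≤ 1 := by nlinarith [sq_nonneg (v 1), sq_abs (v 0), abs_nonneg (v 0)]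
    have hv1 : |v 1| ≤ 1 := by nlinarith [sq_nonneg (v 0), sq_abs (v 1), abs_nonneg (v 1)]
    have hdp : p ⬝ᵥ v = p 0 * v 0 + p 1 * v 1 := by
      simp [dotProduct, Fin.sum_univ_two]
    have : |p ⬝ᵥ v| ≤ |p 0| * |v 0| + |p 1| * |v 1| := by
      rw [hdp]; exact le_trans (abs_add_le _ _) (by rw [abs_mul, abs_mul])
    have hCmax : C ≤ max C 0 := le_max_left _ _
    nlinarith [abs_nonneg (p 0), abs_nonneg (p 1)]
  -- lam⁻¹ ^ n → 0
  have htend : Filter.Tendsto (fun n : ℕ => lam⁻¹ ^ n) Filter.atTop (nhds 0) :=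
    tendsto_pow_atTop_nhds_zero_of_lt_one (by positivity)
      (by rw [inv_lt_one_iff₀]; right; exact hlam1)
  have hev : ∀ᶠ n in Filter.atTop, lam⁻¹ ^ n < r / M := by
    have := htend.eventually (eventually_lt_nhds (by positivity : (0:ℝ) < r / M))
    exact this
  obtain ⟨N, hN⟩ := Filter.eventually_atTop.mp hev
  refine ⟨N, fun n hn p hp => ?_⟩
  rw [hAinv, hdot]
  have h1 : lam⁻¹ ^ n < r / M := hN n hn
  have h2 : |p ⬝ᵥ v| < M := hpv p hp
  have h3 : (0:ℝ) ≤ lam⁻¹ ^ n := by positivity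
  rw [abs_mul, abs_of_nonneg h3]
  calc lam⁻¹ ^ n * |p ⬝ᵥ v| ≤ lam⁻¹ ^ n * M := by
        exact mul_le_mul_of_nonneg_left (le_of_lt h2) h3
    _ < (r / M) * M := by exact mul_lt_mul_of_pos_right h1 hM0
    _ = r := div_mul_cancel₀ r (ne_of_gt hM0)
end
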